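/- Let X ~ μ and Y = f⋆(X) + ξ in ℝ^k, where f⋆ ∈ L2(X,Y,μ) is G-equivariant, ξ is independent of X with E[ξ] = 0 and E[‖ξ‖²] < ∞. Define the risk R[h] = E[‖h(X) − Y‖²]. Let f ∈ L2(X,Y,μ), write f̄ = Qf and f⊥ = f − f̄, and let f′ ∈ L2(X,Y,μ) be any predictor with R[f′] ≤ R[f̄]. Then R[f] − R[f′] ≥ ‖f⊥‖_μ², with equality when R[f′] = R[f̄]. In particular, if f is not G-equivariant (as an element of L2) then R[f] − R[f̄] > 0. -/

import Mathlib

/-!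
Write `f̄ = Q f` and `R[h]` for the risk. Independence of `ξ` from `X` and `E[ξ] = 0` kill the
cross term, so `R[h] = ‖h - f⋆‖²_μ + E‖ξ‖²` for every `h ∈ L2`. Since `μ` is invariant and every
`ψ g` is unitary, Fubini shows that `Q` fixes inner products with equivariant functions:
`⟨h, Q f⟩_μ = ⟨h, f⟩_μ` for equivariant `h`. Right invariance of `λ` makes `f̄` equivariant, hence
so is `f̄ - f⋆`, which is therefore orthogonal to `f⊥ = f - f̄`. Pythagoras then gives
`R[f] = R[f̄] + ‖f⊥‖²_μ`, and all three claims follow from `R[f'] ≤ R[f̄]`.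
-/

open MeasureTheory
open scoped ENNReal

/-- The equivariant averaging operator `Q f (x) = ∫_G ψ(g)⁻¹ f (φ(g) x) dλ(g)`. -/
noncomputable def avgQ {G X : Type*} [MeasurableSpace G] {k : ℕ}
    (lam : Measure G) (φ : G → X → X)
    (ψ : G → (EuclideanSpace ℝ (Fin k) ≃ₗᵢ[ℝ] EuclideanSpace ℝ (Fin k)))
    (f : X → EuclideanSpace ℝ (Fin k)) : X → EuclideanSpace ℝ (Fin k) :=
  fun x => ∫ g, (ψ g).symm (f (φ g x)) ∂lam

/-- `f` is `G`-equivariant: `f (φ g x) = ψ g (f x)` for all `g, x`. -/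
def IsEquivariant {G X : Type*} {k : ℕ} (φ : G → X → X)
    (ψ : G → (EuclideanSpace ℝ (Fin k) ≃ₗᵢ[ℝ] EuclideanSpace ℝ (Fin k)))
    (f : X → EuclideanSpace ℝ (Fin k)) : Prop :=
  ∀ g x, f (φ g x) = ψ g (f x)

open scoped RealInnerProductSpace

section L2

variable {α E : Type*} [MeasurableSpace α] {μ : Measure α} [NormedAddCommGroup E]

lemma integral_norm_sq_pos_of_not_ae_eq_zero {u : α → E} (hu : MemLp u 2 μ)
    (h : ¬ u =ᵐ[μ] 0) : 0 < ∫ x, ‖u x‖ ^ 2 ∂μ := by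
  refine (integral_nonneg fun x => by positivity).lt_of_ne fun h0 => h ?_
  have hsq := (integral_eq_zero_iff_of_nonneg (fun x => by positivity)
    ((memLp_two_iff_integrable_sq_norm hu.1).1 hu)).1 h0.symm
  filter_upwards [hsq] with x hx
  simpa using hx

variable [InnerProductSpace ℝ E]

lemma MeasureTheory.MemLp.integrable_inner {u v : α → E} (hu : MemLp u 2 μ) (hv : MemLp v 2 μ) :
    Integrable (fun x => ⟪u x, v x⟫) μ :=
  (L2.integrable_inner (𝕜 := ℝ) hu.toLp hv.toLp).congr <| by
    filter_upwards [hu.coeFn_toLp, hv.coeFn_toLp] with x hux hvx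
    rw [hux, hvx]

lemma integral_norm_sub_sq_of_integral_inner_eq_zero {u v : α → E}
    (hu : MemLp u 2 μ) (hv : MemLp v 2 μ) (huv : ∫ x, ⟪u x, v x⟫ ∂μ = 0) :
    ∫ x, ‖u x - v x‖ ^ 2 ∂μ = ∫ x, ‖u x‖ ^ 2 ∂μ + ∫ x, ‖v x‖ ^ 2 ∂μ := by
  have hu2 := (memLp_two_iff_integrable_sq_norm hu.1).1 hu
  have hv2 := (memLp_two_iff_integrable_sq_norm hv.1).1 hv
  have huv2 := (hu.integrable_inner hv).const_mul 2
  simp_rw [norm_sub_sq_real]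
  rw [integral_add (f := fun x => ‖u x‖ ^ 2 - 2 * ⟪u x, v x⟫) (hu2.sub huv2) hv2,
    integral_sub hu2 huv2, integral_const_mul, huv]
  ring

end L2

lemma sq_norm_integral_le_integral_sq_norm {α E : Type*} [MeasurableSpace α] {ν : Measure α}
    [IsProbabilityMeasure ν] [NormedAddCommGroup E] [NormedSpace ℝ E] {u : α → E}
    (hu : MemLp u 2 ν) : ‖∫ x, u x ∂ν‖ ^ 2 ≤ ∫ x, ‖u x‖ ^ 2 ∂ν := by
  have hvar := ProbabilityTheory.variance_nonneg (fun x => ‖u x‖) ν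
  rw [ProbabilityTheory.variance_eq_sub hu.norm] at hvar
  calc ‖∫ x, u x ∂ν‖ ^ 2 ≤ (∫ x, ‖u x‖ ∂ν) ^ 2 := by
        gcongr; exact norm_integral_le_integral_norm u
    _ ≤ ∫ x, ‖u x‖ ^ 2 ∂ν := by simpa using hvar

lemma memLp_two_integral_prod_left {α β E : Type*} [MeasurableSpace α] [MeasurableSpace β]
    {μ : Measure α} {ν : Measure β} [SFinite μ] [IsProbabilityMeasure ν]
    [NormedAddCommGroup E] [NormedSpace ℝ E] {F : α × β → E} (hF : MemLp F 2 (μ.prod ν)) :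
    MemLp (fun x => ∫ y, F (x, y) ∂ν) 2 μ := by
  have hF2 := (memLp_two_iff_integrable_sq_norm hF.1).1 hF
  have hslice : ∀ᵐ x ∂μ, MemLp (fun y => F (x, y)) 2 ν := by
    filter_upwards [hF.1.prodMk_left, hF2.prod_right_ae] with x hmeas hint
    exact (memLp_two_iff_integrable_sq_norm hmeas).2 hint
  have hmeas := hF.1.integral_prod_right'
  refine (memLp_two_iff_integrable_sq_norm hmeas).2 <|
    hF2.integral_prod_left.mono' (hmeas.norm.pow 2) ?_
  filter_upwards [hslice] with x hx
  rw [Real.norm_of_nonneg (by positivity)]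
  exact sq_norm_integral_le_integral_sq_norm hx

lemma integral_norm_sub_add_sq_of_indepFun {Ω X E : Type*} [MeasurableSpace Ω]
    [MeasurableSpace X] {P : Measure Ω} [IsFiniteMeasure P] [NormedAddCommGroup E]
    [InnerProductSpace ℝ E] [CompleteSpace E] [MeasurableSpace E] [BorelSpace E]
    {Z : Ω → X} {ξ : Ω → E} (hZ : Measurable Z) (hξ : MemLp ξ 2 P)
    (hind : ProbabilityTheory.IndepFun Z ξ P) (hmean : ∫ ω, ξ ω ∂P = 0) {h fstar : X → E}
    (hh : MemLp h 2 (P.map Z)) (hfstar : MemLp fstar 2 (P.map Z)) :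
    ∫ ω, ‖h (Z ω) - (fstar (Z ω) + ξ ω)‖ ^ 2 ∂P
      = ∫ x, ‖h x - fstar x‖ ^ 2 ∂(P.map Z) + ∫ ω, ‖ξ ω‖ ^ 2 ∂P := by
  have hD := hh.sub hfstar
  have hDZ : MemLp (fun ω => h (Z ω) - fstar (Z ω)) 2 P := hD.comp_measurePreserving ⟨hZ, rfl⟩
  have hξ₁ := hξ.integrable one_le_two
  have hcross : ∫ ω, ⟪h (Z ω) - fstar (Z ω), ξ ω⟫ ∂P = 0 := by
    have := hind.integral_bilin_comp_comp hZ.aemeasurable hξ₁.aemeasurable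
      (hD.integrable one_le_two) ((integrable_map_measure
        hξ₁.aestronglyMeasurable.aestronglyMeasurable_id_map hξ₁.aemeasurable).2 hξ₁) (innerSL ℝ)
    simp only [Pi.sub_apply, id, hmean, map_zero] at this
    exact this
  simp_rw [← sub_sub]
  rw [integral_norm_sub_sq_of_integral_inner_eq_zero hDZ hξ hcross,
    integral_map (f := fun x => ‖h x - fstar x‖ ^ 2) hZ.aemeasurable (hD.1.norm.pow 2)]

lemma measurePreserving_act_prod {G X : Type*} [MeasurableSpace G] [MeasurableSpace X]
    {lam : Measure G} [IsProbabilityMeasure lam] {μ : Measure X} [SFinite μ] {φ : G → X → X}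
    (hφ_meas : Measurable fun p : G × X => φ p.1 p.2) (hμ_inv : ∀ g, μ.map (φ g) = μ) :
    MeasurePreserving (fun q : X × G => φ q.2 q.1) (μ.prod lam) μ := by
  have hact : Measurable fun q : X × G => φ q.2 q.1 := hφ_meas.comp measurable_swap
  refine ⟨hact, Measure.ext fun A hA => ?_⟩
  have hslice : ∀ g, μ ((fun x => (x, g)) ⁻¹' ((fun q : X × G => φ q.2 q.1) ⁻¹' A)) = μ A :=
    fun g => by
      have hφg : Measurable (φ g) := hφ_meas.comp (measurable_const.prodMk measurable_id)
      change μ (φ g ⁻¹' A) = μ A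
      rw [← Measure.map_apply hφg hA, hμ_inv]
  simp [Measure.map_apply hact hA, Measure.prod_apply_symm (hact hA), hslice]

lemma measurable_symm_apply_of_measurable_apply {G E : Type*} [Group G] [MeasurableSpace G]
    [MeasurableInv G] [NormedAddCommGroup E] [NormedSpace ℝ E] [MeasurableSpace E]
    {ψ : G → (E ≃ₗᵢ[ℝ] E)} (hψ_meas : Measurable fun p : G × E => ψ p.1 p.2)
    (hψ_one : ∀ v, ψ 1 v = v) (hψ_mul : ∀ g h v, ψ (g * h) v = ψ g (ψ h v)) :
    Measurable fun p : G × E => (ψ p.1).symm p.2 := by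
  have hinv : ∀ g v, (ψ g).symm v = ψ g⁻¹ v := fun g v =>
    (ψ g).symm_apply_eq.2 (by rw [← hψ_mul, mul_inv_cancel, hψ_one])
  simp_rw [hinv]
  exact hψ_meas.comp (measurable_fst.inv.prodMk measurable_snd)

section Averaging

variable {G X : Type*} {k : ℕ} {φ : G → X → X}
  {ψ : G → (EuclideanSpace ℝ (Fin k) ≃ₗᵢ[ℝ] EuclideanSpace ℝ (Fin k))}

lemma IsEquivariant.sub {f h : X → EuclideanSpace ℝ (Fin k)} (hf : IsEquivariant φ ψ f)
    (hh : IsEquivariant φ ψ h) : IsEquivariant φ ψ (f - h) := fun g x => by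
  simp [hf g x, hh g x]

variable [MeasurableSpace G] {lam : Measure G}

lemma isEquivariant_avgQ [Group G] [MeasurableMul G]
    (hlam_right : ∀ g : G, Measure.map (fun h => h * g) lam = lam)
    (hφ_mul : ∀ g h x, φ (g * h) x = φ g (φ h x)) (hψ_mul : ∀ g h v, ψ (g * h) v = ψ g (ψ h v))
    (f : X → EuclideanSpace ℝ (Fin k)) : IsEquivariant φ ψ (avgQ lam φ ψ f) := by
  intro h x
  -- `ψ(g)⁻¹ = ψ(h) ψ(gh)⁻¹`, after which `g ↦ g h` preserves `λ`
  have hshift : ∀ g, (ψ g).symm (f (φ g (φ h x)))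
      = ψ h ((ψ (g * h)).symm (f (φ (g * h) x))) := fun g => by
    rw [hφ_mul, (ψ g).symm_apply_eq, ← hψ_mul, LinearIsometryEquiv.apply_symm_apply]
  have hpres : MeasurePreserving (MeasurableEquiv.mulRight h) lam lam :=
    ⟨measurable_mul_const h, hlam_right h⟩
  simp only [avgQ, hshift]
  exact (hpres.integral_comp' fun g => ψ h ((ψ g).symm (f (φ g x)))).trans
    ((ψ h).toLinearIsometry.integral_comp_comm _)

variable [MeasurableSpace X] {μ : Measure X}

lemma memLp_avgQ_integrand
    (hact : MeasurePreserving (fun q : X × G => φ q.2 q.1) (μ.prod lam) μ)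
    (hψ_symm : Measurable fun p : G × EuclideanSpace ℝ (Fin k) => (ψ p.1).symm p.2)
    {f : X → EuclideanSpace ℝ (Fin k)} (hf : MemLp f 2 μ) :
    MemLp (fun q : X × G => (ψ q.2).symm (f (φ q.2 q.1))) 2 (μ.prod lam) := by
  have hfact := hf.comp_measurePreserving hact
  refine hfact.congr_norm ?_ (Filter.Eventually.of_forall fun q => by simp)
  exact (hψ_symm.comp_aemeasurable
    (measurable_snd.aemeasurable.prodMk hfact.1.aemeasurable)).aestronglyMeasurable

lemma memLp_avgQ [IsProbabilityMeasure lam] [SFinite μ]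
    (hact : MeasurePreserving (fun q : X × G => φ q.2 q.1) (μ.prod lam) μ)
    (hψ_symm : Measurable fun p : G × EuclideanSpace ℝ (Fin k) => (ψ p.1).symm p.2)
    {f : X → EuclideanSpace ℝ (Fin k)} (hf : MemLp f 2 μ) : MemLp (avgQ lam φ ψ f) 2 μ :=
  memLp_two_integral_prod_left (memLp_avgQ_integrand hact hψ_symm hf)

lemma integral_inner_avgQ [IsProbabilityMeasure lam] [IsFiniteMeasure μ]
    (hact : MeasurePreserving (fun q : X × G => φ q.2 q.1) (μ.prod lam) μ)
    (hψ_symm : Measurable fun p : G × EuclideanSpace ℝ (Fin k) => (ψ p.1).symm p.2)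
    {f h : X → EuclideanSpace ℝ (Fin k)} (hf : MemLp f 2 μ) (hh : MemLp h 2 μ)
    (hh_equiv : IsEquivariant φ ψ h) :
    ∫ x, ⟪h x, avgQ lam φ ψ f x⟫ ∂μ = ∫ x, ⟪h x, f x⟫ ∂μ := by
  have hslice : ∀ᵐ x ∂μ, Integrable (fun g => (ψ g).symm (f (φ g x))) lam :=
    ((memLp_avgQ_integrand hact hψ_symm hf).integrable one_le_two).prod_right_ae
  have hmove : ∀ x g, ⟪h x, (ψ g).symm (f (φ g x))⟫ = ⟪h (φ g x), f (φ g x)⟫ := fun x g => by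
    rw [hh_equiv, ← (ψ g).inner_map_map, LinearIsometryEquiv.apply_symm_apply]
  have hK := hh.integrable_inner hf
  calc ∫ x, ⟪h x, avgQ lam φ ψ f x⟫ ∂μ = ∫ x, ∫ g, ⟪h (φ g x), f (φ g x)⟫ ∂lam ∂μ := by
        refine integral_congr_ae ?_
        filter_upwards [hslice] with x hx
        simp only [avgQ, ← integral_inner hx, hmove]
    _ = ∫ q, ⟪h (φ q.2 q.1), f (φ q.2 q.1)⟫ ∂(μ.prod lam) :=
        (integral_prod _ (hact.integrable_comp_of_integrable hK)).symm
    _ = ∫ x, ⟪h x, f x⟫ ∂μ := by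
        conv_rhs => rw [← hact.map_eq]
        exact (integral_map hact.aemeasurable (by rw [hact.map_eq]; exact hK.1)).symm

end Averaging

theorem stmt_6_general {G X : Type*} [Group G] [TopologicalSpace G] [IsTopologicalGroup G]
    [MeasurableSpace G] [BorelSpace G]
    [MeasurableSpace X]
    {k : ℕ}
    (lam : Measure G) [IsProbabilityMeasure lam]
    (hlam_right : ∀ g : G, Measure.map (fun h => h * g) lam = lam)
    (φ : G → X → X)
    (hφ_meas : Measurable fun p : G × X => φ p.1 p.2)
    (hφ_mul : ∀ g h x, φ (g * h) x = φ g (φ h x))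
    (ψ : G → (EuclideanSpace ℝ (Fin k) ≃ₗᵢ[ℝ] EuclideanSpace ℝ (Fin k)))
    (hψ_meas : Measurable fun p : G × EuclideanSpace ℝ (Fin k) => ψ p.1 p.2)
    (hψ_one : ∀ v, ψ 1 v = v)
    (hψ_mul : ∀ g h v, ψ (g * h) v = ψ g (ψ h v))
    (μ : Measure X) [IsProbabilityMeasure μ]
    (hμ_inv : ∀ g : G, Measure.map (φ g) μ = μ)
    {Ω : Type*} [MeasurableSpace Ω] (P : Measure Ω) [IsProbabilityMeasure P]
    (Xv : Ω → X) (hXv_meas : Measurable Xv) (hXv_law : Measure.map Xv P = μ)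
    (ξ : Ω → EuclideanSpace ℝ (Fin k))
    (hξ_indep : ProbabilityTheory.IndepFun Xv ξ P)
    (hξ_mean : ∫ ω, ξ ω ∂P = 0)
    (hξ_L2 : MemLp ξ 2 P)
    (fstar : X → EuclideanSpace ℝ (Fin k))
    (hfstar_L2 : MemLp fstar 2 μ)
    (hfstar_equiv : IsEquivariant φ ψ fstar)
    (f f' : X → EuclideanSpace ℝ (Fin k))
    (hf : MemLp f 2 μ)
    (hf'_risk : ∫ ω, ‖f' (Xv ω) - (fstar (Xv ω) + ξ ω)‖ ^ 2 ∂P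
      ≤ ∫ ω, ‖avgQ lam φ ψ f (Xv ω) - (fstar (Xv ω) + ξ ω)‖ ^ 2 ∂P) :
    (∫ x, ‖f x - avgQ lam φ ψ f x‖ ^ 2 ∂μ
        ≤ ∫ ω, ‖f (Xv ω) - (fstar (Xv ω) + ξ ω)‖ ^ 2 ∂P
          - ∫ ω, ‖f' (Xv ω) - (fstar (Xv ω) + ξ ω)‖ ^ 2 ∂P) ∧
    (∫ ω, ‖f' (Xv ω) - (fstar (Xv ω) + ξ ω)‖ ^ 2 ∂P
        = ∫ ω, ‖avgQ lam φ ψ f (Xv ω) - (fstar (Xv ω) + ξ ω)‖ ^ 2 ∂P →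
      ∫ ω, ‖f (Xv ω) - (fstar (Xv ω) + ξ ω)‖ ^ 2 ∂P
          - ∫ ω, ‖f' (Xv ω) - (fstar (Xv ω) + ξ ω)‖ ^ 2 ∂P
        = ∫ x, ‖f x - avgQ lam φ ψ f x‖ ^ 2 ∂μ) ∧
    (¬ (f =ᵐ[μ] avgQ lam φ ψ f) →
      0 < ∫ ω, ‖f (Xv ω) - (fstar (Xv ω) + ξ ω)‖ ^ 2 ∂P
          - ∫ ω, ‖avgQ lam φ ψ f (Xv ω) - (fstar (Xv ω) + ξ ω)‖ ^ 2 ∂P) := by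
  set Qf := avgQ lam φ ψ f
  have hact : MeasurePreserving (fun q : X × G => φ q.2 q.1) (μ.prod lam) μ :=
    measurePreserving_act_prod hφ_meas hμ_inv
  have hψ_symm := measurable_symm_apply_of_measurable_apply hψ_meas hψ_one hψ_mul
  have hQf : MemLp Qf 2 μ := memLp_avgQ hact hψ_symm hf
  have hresid : IsEquivariant φ ψ (Qf - fstar) :=
    (isEquivariant_avgQ hlam_right hφ_mul hψ_mul f).sub hfstar_equiv
  have horth : ∫ x, ⟪Qf x - fstar x, Qf x - f x⟫ ∂μ = 0 := by
    have hr : MemLp (fun x => Qf x - fstar x) 2 μ := hQf.sub hfstar_L2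
    simp only [inner_sub_right]
    rw [integral_sub (hr.integrable_inner hQf) (hr.integrable_inner hf)]
    exact sub_eq_zero.2 (integral_inner_avgQ hact hψ_symm hf hr hresid)
  have hpyth : ∫ x, ‖f x - fstar x‖ ^ 2 ∂μ
      = ∫ x, ‖Qf x - fstar x‖ ^ 2 ∂μ + ∫ x, ‖f x - Qf x‖ ^ 2 ∂μ := by
    simpa only [Pi.sub_apply, sub_sub_sub_cancel_left, norm_sub_rev (Qf _) (f _)] using
      integral_norm_sub_sq_of_integral_inner_eq_zero (hQf.sub hfstar_L2) (hQf.sub hf) horth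
  have hrisk : ∀ h, MemLp h 2 μ → ∫ ω, ‖h (Xv ω) - (fstar (Xv ω) + ξ ω)‖ ^ 2 ∂P
      = ∫ x, ‖h x - fstar x‖ ^ 2 ∂μ + ∫ ω, ‖ξ ω‖ ^ 2 ∂P := fun h hh => by
    subst hXv_law
    exact integral_norm_sub_add_sq_of_indepFun hXv_meas hξ_L2 hξ_indep hξ_mean hh hfstar_L2
  have hRf := hrisk f hf
  have hRQf := hrisk Qf hQf
  refine ⟨by linarith, fun _ => by linarith, fun hne => ?_⟩
  have hpos : 0 < ∫ x, ‖f x - Qf x‖ ^ 2 ∂μ :=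
    integral_norm_sq_pos_of_not_ae_eq_zero (hf.sub hQf) fun h0 =>
      hne (by filter_upwards [h0] with x hx; exact sub_eq_zero.1 hx)
  linarith

/-- Strict generalisation benefit of equivariance for squared-error regression with
an equivariant target: for any `f' ` with risk at most that of `f̄ = Q f`,
`R[f] − R[f'] ≥ ‖f⊥‖_μ²`, with equality when `R[f'] = R[f̄]`; in particular, if
`f` is not equivariant as an element of `L2` then `R[f] − R[f̄] > 0`. -/
theorem stmt_6 {G X : Type*} [Group G] [TopologicalSpace G] [IsTopologicalGroup G]
    [CompactSpace G] [SecondCountableTopology G] [T2Space G]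
    [MeasurableSpace G] [BorelSpace G]
    [TopologicalSpace X] [PolishSpace X] [MeasurableSpace X] [BorelSpace X]
    {k : ℕ}
    (lam : Measure G) [IsProbabilityMeasure lam]
    (hlam_left : ∀ g : G, Measure.map (fun h => g * h) lam = lam)
    (hlam_right : ∀ g : G, Measure.map (fun h => h * g) lam = lam)
    (hlam_inv : Measure.map (fun g : G => g⁻¹) lam = lam)
    (φ : G → X → X)
    (hφ_meas : Measurable fun p : G × X => φ p.1 p.2)
    (hφ_one : ∀ x, φ 1 x = x)
    (hφ_mul : ∀ g h x, φ (g * h) x = φ g (φ h x))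
    (ψ : G → (EuclideanSpace ℝ (Fin k) ≃ₗᵢ[ℝ] EuclideanSpace ℝ (Fin k)))
    (hψ_meas : Measurable fun p : G × EuclideanSpace ℝ (Fin k) => ψ p.1 p.2)
    (hψ_one : ∀ v, ψ 1 v = v)
    (hψ_mul : ∀ g h v, ψ (g * h) v = ψ g (ψ h v))
    (μ : Measure X) [IsProbabilityMeasure μ]
    (hμ_inv : ∀ g : G, Measure.map (φ g) μ = μ)
    {Ω : Type*} [MeasurableSpace Ω] (P : Measure Ω) [IsProbabilityMeasure P]
    (Xv : Ω → X) (hXv_meas : Measurable Xv) (hXv_law : Measure.map Xv P = μ)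
    (ξ : Ω → EuclideanSpace ℝ (Fin k)) (hξ_meas : Measurable ξ)
    (hξ_indep : ProbabilityTheory.IndepFun Xv ξ P)
    (hξ_mean : ∫ ω, ξ ω ∂P = 0)
    (hξ_L2 : MemLp ξ 2 P)
    (fstar : X → EuclideanSpace ℝ (Fin k))
    (hfstar_L2 : MemLp fstar 2 μ)
    (hfstar_equiv : IsEquivariant φ ψ fstar)
    (f f' : X → EuclideanSpace ℝ (Fin k))
    (hf : MemLp f 2 μ) (hf' : MemLp f' 2 μ)
    (hf'_risk : ∫ ω, ‖f' (Xv ω) - (fstar (Xv ω) + ξ ω)‖ ^ 2 ∂P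
      ≤ ∫ ω, ‖avgQ lam φ ψ f (Xv ω) - (fstar (Xv ω) + ξ ω)‖ ^ 2 ∂P) :
    (∫ x, ‖f x - avgQ lam φ ψ f x‖ ^ 2 ∂μ
        ≤ ∫ ω, ‖f (Xv ω) - (fstar (Xv ω) + ξ ω)‖ ^ 2 ∂P
          - ∫ ω, ‖f' (Xv ω) - (fstar (Xv ω) + ξ ω)‖ ^ 2 ∂P) ∧
    (∫ ω, ‖f' (Xv ω) - (fstar (Xv ω) + ξ ω)‖ ^ 2 ∂P
        = ∫ ω, ‖avgQ lam φ ψ f (Xv ω) - (fstar (Xv ω) + ξ ω)‖ ^ 2 ∂P →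
      ∫ ω, ‖f (Xv ω) - (fstar (Xv ω) + ξ ω)‖ ^ 2 ∂P
          - ∫ ω, ‖f' (Xv ω) - (fstar (Xv ω) + ξ ω)‖ ^ 2 ∂P
        = ∫ x, ‖f x - avgQ lam φ ψ f x‖ ^ 2 ∂μ) ∧
    (¬ (f =ᵐ[μ] avgQ lam φ ψ f) →
      0 < ∫ ω, ‖f (Xv ω) - (fstar (Xv ω) + ξ ω)‖ ^ 2 ∂P
          - ∫ ω, ‖avgQ lam φ ψ f (Xv ω) - (fstar (Xv ω) + ξ ω)‖ ^ 2 ∂P) :=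
  stmt_6_general lam hlam_right φ hφ_meas hφ_mul ψ hψ_meas hψ_one hψ_mul μ hμ_inv P Xv hXv_meas
    hXv_law ξ hξ_indep hξ_mean hξ_L2 fstar hfstar_L2 hfstar_equiv f f' hf hf'_risk
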